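/- Let b : ℕ → ℕ satisfy b(i) ≤ i and b(i+1) ≤ b(i) + 1 for all i, and suppose i - b(i) is unbounded. Then there exist functions r, s : ℕ → ℕ with 1 ≤ r(i) < s(i) such that, with c(i) = b(i) + 1, we have r(i) ≥ L̃_c(i) for all i and ∑_{i=1}^∞ r(i)/L̃_b(i) < ∞, where L̃_x(i) = max(0, ∑_{j=1}^{i-x(i)} s(j) - ∑_{j=1}^{i-1} r(j)) (and terms with L̃_b(i) = 0 are omitted or the statement asserts L̃_b(i) > 0). -/

import Mathlib

/-- The last index `i` with `i - b i ≤ j` (one less than the first index where `i - b i > j`). -/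
def Ifn (b : ℕ → ℕ) (hu : ∀ M, ∃ i, M < i - b i) (j : ℕ) : ℕ :=
  Nat.find (hu j) - 1

lemma Ifn_lt (b : ℕ → ℕ) (hu : ∀ M, ∃ i, M < i - b i) {j i : ℕ}
    (h : j < i - b i) : Ifn b hu j < i := by
  have h1 : Nat.find (hu j) ≤ i := Nat.find_le h
  have h2 : 1 ≤ i := by omega
  unfold Ifn; omega

lemma key_lt (b : ℕ → ℕ) (hu : ∀ M, ∃ i, M < i - b i) {i j k : ℕ}
    (hj : j ∈ Finset.Icc 1 (i - b i - 1)) (hk : k ∈ Finset.Icc 1 (Ifn b hu j)) : k < i := by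
  rw [Finset.mem_Icc] at hj hk
  have h1 : j < i - b i := by omega
  have := Ifn_lt b hu h1
  omega

lemma snd_lt (b : ℕ → ℕ) {i j : ℕ} (hj : j ∈ Finset.Icc 1 (i - 1)) : j < i := by
  rw [Finset.mem_Icc] at hj; omega

/-- The sequence `r`. -/
def rfn (b : ℕ → ℕ) (hu : ∀ M, ∃ i, M < i - b i) : ℕ → ℕ :=
  WellFounded.fix Nat.lt_wfRel.wf fun i ih =>
    max i ((∑ j ∈ (Finset.Icc 1 (i - b i - 1)).attach,
      (Ifn b hu j.1 + 1) ^ 3 *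
        ((∑ k ∈ (Finset.Icc 1 (Ifn b hu j.1)).attach,
          ih k.1 (key_lt b hu j.2 k.2)) + 1)) -
      ∑ j ∈ (Finset.Icc 1 (i - 1)).attach, ih j.1 (snd_lt b j.2))

/-- The sequence `s`. -/
def sfn (b : ℕ → ℕ) (hu : ∀ M, ∃ i, M < i - b i) (j : ℕ) : ℕ :=
  (Ifn b hu j + 1) ^ 3 * ((∑ k ∈ Finset.Icc 1 (Ifn b hu j), rfn b hu k) + 1)

lemma rfn_eq (b : ℕ → ℕ) (hu : ∀ M, ∃ i, M < i - b i) (i : ℕ) :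
    rfn b hu i = max i ((∑ j ∈ Finset.Icc 1 (i - b i - 1), sfn b hu j) -
      ∑ j ∈ Finset.Icc 1 (i - 1), rfn b hu j) := by
  show WellFounded.fix Nat.lt_wfRel.wf _ i = _
  rw [WellFounded.fix_eq]
  have h1 : ∀ j : ℕ, (Ifn b hu j + 1) ^ 3 *
      ((∑ k ∈ (Finset.Icc 1 (Ifn b hu j)).attach, rfn b hu k.1) + 1) = sfn b hu j := by
    intro j
    rw [Finset.sum_attach (Finset.Icc 1 (Ifn b hu j)) (fun k => rfn b hu k)]
    rfl
  show max i ((∑ j ∈ (Finset.Icc 1 (i - b i - 1)).attach, (Ifn b hu j.1 + 1) ^ 3 *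
      ((∑ k ∈ (Finset.Icc 1 (Ifn b hu j.1)).attach, rfn b hu k.1) + 1)) -
      ∑ j ∈ (Finset.Icc 1 (i - 1)).attach, rfn b hu j.1) = _
  rw [Finset.sum_attach (Finset.Icc 1 (i - 1)) (fun k => rfn b hu k)]
  congr 2
  rw [Finset.sum_congr rfl (fun j _ => h1 j.1)]
  exact Finset.sum_attach (Finset.Icc 1 (i - b i - 1)) (fun j => sfn b hu j)

lemma le_rfn (b : ℕ → ℕ) (hu : ∀ M, ∃ i, M < i - b i) (i : ℕ) : i ≤ rfn b hu i := by
  rw [rfn_eq]; exact le_max_left _ _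

lemma le_Ifn (b : ℕ → ℕ) (hu : ∀ M, ∃ i, M < i - b i)
    (hrest : ∀ i, b (i + 1) ≤ b i + 1) {i j : ℕ} (h : i - b i ≤ j) :
    i ≤ Ifn b hu j := by
  have hmono : Monotone (fun i => i - b i) := by
    apply monotone_nat_of_le_succ
    intro n
    have := hrest n
    omega
  by_contra hc
  push_neg at hc
  have hfind : Nat.find (hu j) ≤ i := by unfold Ifn at hc; omega
  have h3 : Nat.find (hu j) - b (Nat.find (hu j)) ≤ i - b i := hmono hfind
  have h4 : j < Nat.find (hu j) - b (Nat.find (hu j)) := Nat.find_spec (hu j)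
  omega

theorem memory_helps_construction (b : ℕ → ℕ) (hb : ∀ i, b i ≤ i)
    (hrest : ∀ i, b (i + 1) ≤ b i + 1) (hunb : ∀ M, ∃ i, M < i - b i) :
    ∃ r s : ℕ → ℕ, (∀ i, 1 ≤ i → 1 ≤ r i ∧ r i < s i) ∧
      (∀ i, 1 ≤ i →
        (∑ j ∈ Finset.Icc 1 (i - (b i + 1)), s j) - (∑ j ∈ Finset.Icc 1 (i - 1), r j) ≤ r i) ∧
      Summable (fun i : ℕ => (r i : ℝ) /
        (((∑ j ∈ Finset.Icc 1 (i - b i), s j) - (∑ j ∈ Finset.Icc 1 (i - 1), r j) : ℕ) : ℝ)) := by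
  refine ⟨rfn b hunb, sfn b hunb, ?_, ?_, ?_⟩
  · intro i hi
    refine ⟨le_trans hi (le_rfn b hunb i), ?_⟩
    have hIi : i ≤ Ifn b hunb i := le_Ifn b hunb hrest (Nat.sub_le i (b i))
    have hrR : rfn b hunb i ≤ ∑ k ∈ Finset.Icc 1 (Ifn b hunb i), rfn b hunb k :=
      Finset.single_le_sum (f := fun k => rfn b hunb k) (fun k _ => Nat.zero_le _)
        (Finset.mem_Icc.mpr ⟨hi, hIi⟩)
    have h1 : 1 ≤ (Ifn b hunb i + 1) ^ 3 := Nat.one_le_iff_ne_zero.mpr (by positivity)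
    calc rfn b hunb i ≤ ∑ k ∈ Finset.Icc 1 (Ifn b hunb i), rfn b hunb k := hrR
      _ < (∑ k ∈ Finset.Icc 1 (Ifn b hunb i), rfn b hunb k) + 1 := Nat.lt_succ_self _
      _ ≤ sfn b hunb i := by
          unfold sfn
          calc (∑ k ∈ Finset.Icc 1 (Ifn b hunb i), rfn b hunb k) + 1
              = 1 * ((∑ k ∈ Finset.Icc 1 (Ifn b hunb i), rfn b hunb k) + 1) := (one_mul _).symm
            _ ≤ _ := Nat.mul_le_mul_right _ h1
  · intro i _
    have : i - (b i + 1) = i - b i - 1 := by omega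
    rw [this]
    have := rfn_eq b hunb i
    omega
  · have hbound : ∀ i : ℕ,
        (rfn b hunb i : ℝ) /
          (((∑ j ∈ Finset.Icc 1 (i - b i), sfn b hunb j) -
            (∑ j ∈ Finset.Icc 1 (i - 1), rfn b hunb j) : ℕ) : ℝ) ≤ 1 / (i : ℝ) ^ 2 ∧
        0 ≤ (rfn b hunb i : ℝ) /
          (((∑ j ∈ Finset.Icc 1 (i - b i), sfn b hunb j) -
            (∑ j ∈ Finset.Icc 1 (i - 1), rfn b hunb j) : ℕ) : ℝ) := by
      intro i
      set D : ℕ := (∑ j ∈ Finset.Icc 1 (i - b i), sfn b hunb j) -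
        (∑ j ∈ Finset.Icc 1 (i - 1), rfn b hunb j) with hD
      have hnonneg : (0:ℝ) ≤ (rfn b hunb i : ℝ) / (D : ℝ) := by positivity
      refine ⟨?_, hnonneg⟩
      rcases Nat.eq_zero_or_pos i with hi0 | hi
      · subst hi0
        have hr0 : rfn b hunb 0 = 0 := by
          rw [rfn_eq]
          simp
        rw [hr0]
        simp
      rcases Nat.eq_zero_or_pos (i - b i) with hm0 | hm
      · have : D = 0 := by
          rw [hD, hm0]
          simp
        rw [this]
        simp
      · -- main case : i ≥ 1, m i ≥ 1
        set m := i - b i with hm'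
        have hmem : m ∈ Finset.Icc 1 m := Finset.mem_Icc.mpr ⟨hm, le_refl m⟩
        have hsS : sfn b hunb m ≤ ∑ j ∈ Finset.Icc 1 m, sfn b hunb j :=
          Finset.single_le_sum (f := fun j => sfn b hunb j) (fun k _ => Nat.zero_le _) hmem
        set N := Ifn b hunb m with hN
        have hiN : i ≤ N := le_Ifn b hunb hrest (le_refl m)
        set A := ∑ k ∈ Finset.Icc 1 N, rfn b hunb k with hA
        -- r i ≤ A, R(i-1) ≤ A
        have hrA : rfn b hunb i ≤ A := Finset.single_le_sum
          (f := fun k => rfn b hunb k) (fun k _ => Nat.zero_le _)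
          (Finset.mem_Icc.mpr ⟨hi, hiN⟩)
        have hRA : (∑ j ∈ Finset.Icc 1 (i - 1), rfn b hunb j) ≤ A := by
          apply Finset.sum_le_sum_of_subset
          apply Finset.Icc_subset_Icc_right
          omega
        -- s m ≥ i^2 * r i + R(i-1)
        have hkey : i ^ 2 * rfn b hunb i + (∑ j ∈ Finset.Icc 1 (i - 1), rfn b hunb j)
            ≤ sfn b hunb m := by
          unfold sfn
          rw [← hN, ← hA]
          have h1 : i ^ 2 * rfn b hunb i ≤ N ^ 2 * A :=
            Nat.mul_le_mul (Nat.pow_le_pow_left hiN 2) hrA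
          have hN3 : N ^ 2 + 1 ≤ (N + 1) ^ 3 := by nlinarith
          have h2 : N ^ 2 * A + A ≤ (N + 1) ^ 3 * (A + 1) := by
            have e1 : N ^ 2 * A + A = (N ^ 2 + 1) * A := by ring
            rw [e1]
            exact Nat.mul_le_mul hN3 (Nat.le_succ A)
          omega
        have hDge : i ^ 2 * rfn b hunb i ≤ D := by
          rw [hD]
          omega
        have hDpos : 0 < D := by
          have h1 : 1 ≤ rfn b hunb i := le_trans hi (le_rfn b hunb i)
          nlinarith
        rw [div_le_div_iff₀ (by exact_mod_cast hDpos) (by positivity)]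
        have : (i:ℝ) ^ 2 * (rfn b hunb i : ℝ) ≤ (D : ℝ) := by exact_mod_cast hDge
        nlinarith
    apply Summable.of_nonneg_of_le (fun i => (hbound i).2) (fun i => (hbound i).1)
    exact Real.summable_one_div_nat_pow.mpr one_lt_two
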